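/- arXiv:1709.04913 — 7 statements merged into one kernel-verified Lean document; each statement's English description precedes it below -/
import Mathlib

section
/- The hyperplane arrangement I(B₃, 𝟕 ⊕ 𝟖) has exactly two chambers. Concretely, the set C = {(t₁,t₂,t₃) ∈ ℝ³ : t₁ > 0, t₂ > 0, t₃ > 0, and each of the linear forms t₁+t₂+t₃, t₂+t₃, t₃, t₁+2t₂+3t₃, t₁+2t₂+t₃, t₁+t₃, t₁−t₃ is nonzero} has exactly two connected components, namely {t : t₁,t₂,t₃ > 0 and t₁ > t₃} and {t : t₁,t₂,t₃ > 0 and t₁ < t₃}. -/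
private lemma combo_pos {a b x y : ℝ} (ha : 0 ≤ a) (hb : 0 ≤ b) (hab : a + b = 1)
    (hx : 0 < x) (hy : 0 < y) : 0 < a * x + b * y := by
  rcases ha.lt_or_eq with h | h
  · nlinarith [mul_nonneg hb hy.le]
  · nlinarith

/-- The hyperplane arrangement I(B₃, 𝟕 ⊕ 𝟖) has exactly two chambers: the complement,
inside the open positive octant in the coordinates `t_i = ⟨α_i, φ⟩`, of the kernels of the
weights of `𝟕 ⊕ 𝟖` (the linear forms `t₁+t₂+t₃`, `t₂+t₃`, `t₃`, `t₁+2t₂+3t₃`, `t₁+2t₂+t₃`,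
`t₁+t₃`, `t₁−t₃`) has exactly two connected components, namely
`{t₁,t₂,t₃ > 0 ∧ t₁ > t₃}` and `{t₁,t₂,t₃ > 0 ∧ t₁ < t₃}`. -/
theorem B3_seven_eight_two_chambers :
    let C : Set (ℝ × ℝ × ℝ) := {t | 0 < t.1 ∧ 0 < t.2.1 ∧ 0 < t.2.2 ∧
      t.1 + t.2.1 + t.2.2 ≠ 0 ∧ t.2.1 + t.2.2 ≠ 0 ∧ t.2.2 ≠ 0 ∧
      t.1 + 2 * t.2.1 + 3 * t.2.2 ≠ 0 ∧ t.1 + 2 * t.2.1 + t.2.2 ≠ 0 ∧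
      t.1 + t.2.2 ≠ 0 ∧ t.1 - t.2.2 ≠ 0}
    let A : Set (ℝ × ℝ × ℝ) := {t | 0 < t.1 ∧ 0 < t.2.1 ∧ 0 < t.2.2 ∧ t.2.2 < t.1}
    let B : Set (ℝ × ℝ × ℝ) := {t | 0 < t.1 ∧ 0 < t.2.1 ∧ 0 < t.2.2 ∧ t.1 < t.2.2}
    ({s : Set (ℝ × ℝ × ℝ) | ∃ x ∈ C, s = connectedComponentIn C x} = {A, B}) ∧ A ≠ B := by
  intro C A B
  -- basic continuity facts
  have c1 : Continuous fun t : ℝ × ℝ × ℝ => t.1 := continuous_fst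
  have c2 : Continuous fun t : ℝ × ℝ × ℝ => t.2.1 := continuous_fst.comp continuous_snd
  have c3 : Continuous fun t : ℝ × ℝ × ℝ => t.2.2 := continuous_snd.comp continuous_snd
  have hAopen : IsOpen A := by
    have : A = ({t : ℝ × ℝ × ℝ | 0 < t.1} ∩ {t | 0 < t.2.1}) ∩
        ({t | 0 < t.2.2} ∩ {t | t.2.2 < t.1}) := by
      ext t; simp only [Set.mem_setOf_eq, Set.mem_inter_iff, A]; tauto
    rw [this]
    exact (((isOpen_lt continuous_const c1).inter (isOpen_lt continuous_const c2)).inter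
      ((isOpen_lt continuous_const c3).inter (isOpen_lt c3 c1)))
  have hBopen : IsOpen B := by
    have : B = ({t : ℝ × ℝ × ℝ | 0 < t.1} ∩ {t | 0 < t.2.1}) ∩
        ({t | 0 < t.2.2} ∩ {t | t.1 < t.2.2}) := by
      ext t; simp only [Set.mem_setOf_eq, Set.mem_inter_iff, B]; tauto
    rw [this]
    exact (((isOpen_lt continuous_const c1).inter (isOpen_lt continuous_const c2)).inter
      ((isOpen_lt continuous_const c3).inter (isOpen_lt c1 c3)))
  have hAconv : Convex ℝ A := by
    rintro x ⟨hx1, hx2, hx3, hx4⟩ y ⟨hy1, hy2, hy3, hy4⟩ a b ha hb hab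
    refine ⟨?_, ?_, ?_, ?_⟩
    · simpa using combo_pos ha hb hab hx1 hy1
    · simpa using combo_pos ha hb hab hx2 hy2
    · simpa using combo_pos ha hb hab hx3 hy3
    · have := combo_pos ha hb hab (sub_pos.mpr hx4) (sub_pos.mpr hy4)
      simp only [Prod.fst_add, Prod.snd_add, Prod.smul_fst, Prod.smul_snd, smul_eq_mul]
      nlinarith
  have hBconv : Convex ℝ B := by
    rintro x ⟨hx1, hx2, hx3, hx4⟩ y ⟨hy1, hy2, hy3, hy4⟩ a b ha hb hab
    refine ⟨?_, ?_, ?_, ?_⟩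
    · simpa using combo_pos ha hb hab hx1 hy1
    · simpa using combo_pos ha hb hab hx2 hy2
    · simpa using combo_pos ha hb hab hx3 hy3
    · have := combo_pos ha hb hab (sub_pos.mpr hx4) (sub_pos.mpr hy4)
      simp only [Prod.fst_add, Prod.snd_add, Prod.smul_fst, Prod.smul_snd, smul_eq_mul]
      nlinarith
  have hdisj : Disjoint A B := by
    rw [Set.disjoint_left]
    rintro t ⟨_, _, _, h⟩ ⟨_, _, _, h'⟩
    exact absurd (h.trans h') (lt_irrefl _)
  have hCAB : C = A ∪ B := by
    ext t
    constructor
    · rintro ⟨h1, h2, h3, _, _, _, _, _, _, h7⟩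
      rcases lt_or_gt_of_ne (sub_ne_zero.mp h7) with h | h
      · exact Or.inr ⟨h1, h2, h3, h⟩
      · exact Or.inl ⟨h1, h2, h3, h⟩
    · rintro (⟨h1, h2, h3, h4⟩ | ⟨h1, h2, h3, h4⟩) <;>
        exact ⟨h1, h2, h3, by positivity, by positivity, by positivity, by positivity,
          by positivity, by positivity, sub_ne_zero.mpr (by intro h; rw [h] at h4; exact lt_irrefl _ h4)⟩
  have keyA : ∀ x ∈ A, connectedComponentIn C x = A := by
    intro x hx
    apply subset_antisymm
    · refine IsPreconnected.subset_left_of_subset_union hAopen hBopen hdisj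
        (hCAB ▸ connectedComponentIn_subset C x)
        ⟨x, mem_connectedComponentIn (hCAB ▸ Set.mem_union_left B hx), hx⟩
        (isPreconnected_connectedComponentIn)
    · exact hAconv.isPreconnected.subset_connectedComponentIn hx
        (hCAB ▸ Set.subset_union_left)
  have keyB : ∀ x ∈ B, connectedComponentIn C x = B := by
    intro x hx
    apply subset_antisymm
    · refine IsPreconnected.subset_right_of_subset_union hAopen hBopen hdisj
        (hCAB ▸ connectedComponentIn_subset C x)
        ⟨x, mem_connectedComponentIn (hCAB ▸ Set.mem_union_right A hx), hx⟩
        (isPreconnected_connectedComponentIn)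
    · exact hBconv.isPreconnected.subset_connectedComponentIn hx
        (hCAB ▸ Set.subset_union_right)
  have haA : ((2 : ℝ), (1 : ℝ), (1 : ℝ)) ∈ A := by
    refine ⟨by norm_num, by norm_num, by norm_num, by norm_num⟩
  have hbB : ((1 : ℝ), (1 : ℝ), (2 : ℝ)) ∈ B := by
    refine ⟨by norm_num, by norm_num, by norm_num, by norm_num⟩
  constructor
  · ext s
    simp only [Set.mem_setOf_eq, Set.mem_insert_iff, Set.mem_singleton_iff]
    constructor
    · rintro ⟨x, hx, rfl⟩
      rcases (hCAB ▸ hx : x ∈ A ∪ B) with h | h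
      · exact Or.inl (keyA x h)
      · exact Or.inr (keyB x h)
    · rintro (rfl | rfl)
      · exact ⟨(2, 1, 1), hCAB ▸ Set.mem_union_left B haA, (keyA _ haA).symm⟩
      · exact ⟨(1, 1, 2), hCAB ▸ Set.mem_union_right A hbB, (keyB _ hbB).symm⟩
  · intro h
    have : ((2 : ℝ), (1 : ℝ), (1 : ℝ)) ∈ B := h ▸ haA
    exact absurd (haA.2.2.2.trans this.2.2.2) (lt_irrefl _)
end

section
/- The hyperplane arrangement I(D₄, 𝟖_v ⊕ 𝟖_s ⊕ 𝟖_c) has exactly six chambers, whose incidence graph is a hexagon. Concretely, the set C = {(t₁,t₂,t₃,t₄) ∈ ℝ⁴ : t₁,t₂,t₃,t₄ > 0 and each of the twelve linear forms 2t₁+2t₂+t₃+t₄, 2t₂+t₃+t₄, t₃+t₄, t₃−t₄, t₁+2t₂+2t₃+t₄, t₁+2t₂+t₄, t₁+t₄, t₄−t₁, t₁+2t₂+t₃+2t₄, t₁+2t₂+t₃, t₁+t₃, t₃−t₁ is nonzero} has exactly six connected components, namely the intersections of the open positive orthant with the six regions determined by the strict orderings of t₁, t₃, t₄ (each ordering occurs).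 -/
/-!
On the open positive orthant nine of the twelve forms have nonnegative coefficients, not all
zero, so they never vanish there. The other three, `t₃ - t₄`, `t₄ - t₁`, `t₃ - t₁`, cut out the
braid arrangement in `(t₁, t₃, t₄)`, whose complement in the orthant is the disjoint union of the
six open convex regions given by the strict orderings of `t₁, t₃, t₄`. A set that is a disjoint
union of open preconnected pieces has exactly these pieces as its connected components.
-/

open Set Function

section ConnectedComponents

variable {X ι : Type*} {U : ι → Set X}

theorem Pairwise.injective_of_disjoint_of_nonempty (hdisj : Pairwise (Disjoint on U))
    (hne : ∀ i, (U i).Nonempty) : Injective U := by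
  intro i j hij
  by_contra h
  have hself : Disjoint (U i) (U j) := hdisj h
  rw [← hij] at hself
  exact (hne i).ne_empty (disjoint_self.1 hself)

variable [TopologicalSpace X]

theorem connectedComponentIn_iUnion_eq (hopen : ∀ i, IsOpen (U i))
    (hconn : ∀ i, IsPreconnected (U i)) (hdisj : Pairwise (Disjoint on U)) {i : ι} {x : X}
    (hx : x ∈ U i) : connectedComponentIn (⋃ j, U j) x = U i := by
  refine Subset.antisymm ?_ ((hconn i).subset_connectedComponentIn hx (subset_iUnion U i))
  have hcover : ⋃ j, U j ⊆ U i ∪ ⋃ (j) (_ : j ≠ i), U j := by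
    refine iUnion_subset fun j => ?_
    rcases eq_or_ne j i with rfl | hj
    · exact subset_union_left
    · exact (subset_biUnion_of_mem (u := U) hj).trans subset_union_right
  exact isPreconnected_connectedComponentIn.subset_left_of_subset_union (hopen i)
    (isOpen_biUnion fun j _ => hopen j) (disjoint_iUnion₂_right.2 fun j hj => hdisj (Ne.symm hj))
    ((connectedComponentIn_subset _ x).trans hcover)
    ⟨x, mem_connectedComponentIn (mem_iUnion_of_mem i hx), hx⟩

theorem setOf_connectedComponentIn_iUnion_eq_range (hopen : ∀ i, IsOpen (U i))
    (hconn : ∀ i, IsPreconnected (U i)) (hdisj : Pairwise (Disjoint on U))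
    (hne : ∀ i, (U i).Nonempty) :
    {s | ∃ x ∈ ⋃ j, U j, s = connectedComponentIn (⋃ j, U j) x} = range U := by
  ext s
  constructor
  · rintro ⟨x, hx, rfl⟩
    obtain ⟨i, hi⟩ := mem_iUnion.1 hx
    exact ⟨i, (connectedComponentIn_iUnion_eq hopen hconn hdisj hi).symm⟩
  · rintro ⟨i, rfl⟩
    obtain ⟨x, hx⟩ := hne i
    exact ⟨x, mem_iUnion_of_mem i hx, (connectedComponentIn_iUnion_eq hopen hconn hdisj hx).symm⟩

end ConnectedComponents

namespace D4Arrangement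

def orthant : Set (Fin 4 → ℝ) := {t | 0 < t 0 ∧ 0 < t 1 ∧ 0 < t 2 ∧ 0 < t 3}

def arrangementComplement : Set (Fin 4 → ℝ) := {t | (0 < t 0 ∧ 0 < t 1 ∧ 0 < t 2 ∧ 0 < t 3) ∧
      2 * t 0 + 2 * t 1 + t 2 + t 3 ≠ 0 ∧ 2 * t 1 + t 2 + t 3 ≠ 0 ∧
      t 2 + t 3 ≠ 0 ∧ t 2 - t 3 ≠ 0 ∧
      t 0 + 2 * t 1 + 2 * t 2 + t 3 ≠ 0 ∧ t 0 + 2 * t 1 + t 3 ≠ 0 ∧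
      t 0 + t 3 ≠ 0 ∧ t 3 - t 0 ≠ 0 ∧
      t 0 + 2 * t 1 + t 2 + 2 * t 3 ≠ 0 ∧ t 0 + 2 * t 1 + t 2 ≠ 0 ∧
      t 0 + t 2 ≠ 0 ∧ t 2 - t 0 ≠ 0}

def orderChamber (a b c : Fin 4) : Set (Fin 4 → ℝ) := orthant ∩ {t | t b < t a ∧ t c < t b}

/-- Listed once around the hexagon: consecutive chambers differ by one adjacent transposition. -/
def chamber : Fin 6 → Set (Fin 4 → ℝ) :=
  ![orderChamber 0 2 3, orderChamber 2 0 3, orderChamber 2 3 0,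
    orderChamber 3 2 0, orderChamber 3 0 2, orderChamber 0 3 2]

theorem arrangementComplement_eq :
    arrangementComplement = orthant ∩ {t | t 2 ≠ t 3 ∧ t 3 ≠ t 0 ∧ t 2 ≠ t 0} := by
  ext t
  simp only [arrangementComplement, orthant, mem_ofPred_eq, mem_inter_iff, sub_ne_zero]
  constructor
  · rintro ⟨hpos, -, -, -, h₁, -, -, -, h₂, -, -, -, h₃⟩
    exact ⟨hpos, h₁, h₂, h₃⟩
  · rintro ⟨⟨h0, h1, h2, h3⟩, h₁, h₂, h₃⟩
    refine ⟨⟨h0, h1, h2, h3⟩, ?_, ?_, ?_, h₁, ?_, ?_, ?_, h₂, ?_, ?_, ?_, h₃⟩ <;> positivity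

theorem orthant_inter_ne_eq_iUnion_chamber :
    orthant ∩ {t | t 2 ≠ t 3 ∧ t 3 ≠ t 0 ∧ t 2 ≠ t 0} = ⋃ i, chamber i := by
  ext t
  simp only [mem_inter_iff, mem_ofPred_eq, mem_iUnion, Fin.exists_fin_succ, Fin.exists_fin_zero,
    chamber, orderChamber, Matrix.cons_val_zero, Matrix.cons_val_succ]
  constructor
  · rintro ⟨ht, h₁, h₂, h₃⟩
    rcases h₁.lt_or_gt with h₁ | h₁ <;> rcases h₂.lt_or_gt with h₂ | h₂ <;>
      rcases h₃.lt_or_gt with h₃ | h₃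
    all_goals grind
  · grind

theorem isOpen_orthant : IsOpen orthant :=
  (isOpen_lt continuous_const (continuous_apply 0)).inter
    ((isOpen_lt continuous_const (continuous_apply 1)).inter
      ((isOpen_lt continuous_const (continuous_apply 2)).inter
        (isOpen_lt continuous_const (continuous_apply 3))))

theorem convex_setOf_apply_pos {ι : Type*} (i : ι) : Convex ℝ {t : ι → ℝ | 0 < t i} :=
  convex_halfSpace_gt (LinearMap.proj (R := ℝ) i).isLinear 0

theorem convex_setOf_apply_lt {ι : Type*} (i j : ι) : Convex ℝ {t : ι → ℝ | t i < t j} := by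
  simpa only [Pi.sub_apply, sub_pos] using
    convex_halfSpace_gt (f := fun t : ι → ℝ => t j - t i)
      ⟨fun x y => by simp only [Pi.add_apply]; ring,
        fun c x => by simp only [Pi.smul_apply, smul_eq_mul]; ring⟩ 0

theorem convex_orthant : Convex ℝ orthant :=
  (convex_setOf_apply_pos 0).inter ((convex_setOf_apply_pos 1).inter
    ((convex_setOf_apply_pos 2).inter (convex_setOf_apply_pos 3)))

theorem isOpen_orderChamber (a b c : Fin 4) : IsOpen (orderChamber a b c) :=
  isOpen_orthant.inter ((isOpen_lt (continuous_apply b) (continuous_apply a)).inter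
    (isOpen_lt (continuous_apply c) (continuous_apply b)))

theorem convex_orderChamber (a b c : Fin 4) : Convex ℝ (orderChamber a b c) :=
  convex_orthant.inter ((convex_setOf_apply_lt b a).inter (convex_setOf_apply_lt c b))

theorem orderChamber_nonempty {a b c : Fin 4} (hab : a ≠ b) (hac : a ≠ c) (hbc : b ≠ c) :
    (orderChamber a b c).Nonempty := by
  set t : Fin 4 → ℝ := fun i => if i = a then 3 else if i = b then 2 else 1
  have hpos (i : Fin 4) : 0 < t i := by dsimp only [t]; split_ifs <;> norm_num
  exact ⟨t, ⟨hpos 0, hpos 1, hpos 2, hpos 3⟩, by norm_num [t, hab.symm, hac.symm, hbc.symm]⟩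

theorem chamber_nonempty (i : Fin 6) : (chamber i).Nonempty := by
  fin_cases i <;> exact orderChamber_nonempty (by decide) (by decide) (by decide)

theorem pairwise_disjoint_chamber : Pairwise (Disjoint on chamber) := by
  intro i j hij
  fin_cases i <;> fin_cases j <;> simp only [ne_eq, not_true_eq_false] at hij <;>
    simp only [onFun, chamber, orderChamber, disjoint_left] <;>
    rintro t ⟨-, h₁, h₂⟩ ⟨-, h₃, h₄⟩ <;> linarith

theorem isOpen_chamber (i : Fin 6) : IsOpen (chamber i) := by
  fin_cases i <;> exact isOpen_orderChamber _ _ _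

theorem isPreconnected_chamber (i : Fin 6) : IsPreconnected (chamber i) := by
  fin_cases i <;> exact (convex_orderChamber _ _ _).isPreconnected

theorem range_chamber : range chamber = {orderChamber 0 2 3, orderChamber 2 0 3,
    orderChamber 2 3 0, orderChamber 3 2 0, orderChamber 3 0 2, orderChamber 0 3 2} := by
  simp only [chamber, Matrix.range_cons, Matrix.range_empty, union_empty, singleton_union]

theorem arrangementComplement_eq_iUnion_chamber : arrangementComplement = ⋃ i, chamber i := by
  rw [arrangementComplement_eq, orthant_inter_ne_eq_iUnion_chamber]

theorem setOf_connectedComponentIn_arrangementComplement :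
    {s | ∃ x ∈ arrangementComplement, s = connectedComponentIn arrangementComplement x} =
      {orderChamber 0 2 3, orderChamber 2 0 3, orderChamber 2 3 0,
        orderChamber 3 2 0, orderChamber 3 0 2, orderChamber 0 3 2} := by
  rw [arrangementComplement_eq_iUnion_chamber, ← range_chamber]
  exact setOf_connectedComponentIn_iUnion_eq_range isOpen_chamber isPreconnected_chamber
    pairwise_disjoint_chamber chamber_nonempty

theorem ncard_chambers : ({orderChamber 0 2 3, orderChamber 2 0 3, orderChamber 2 3 0,
    orderChamber 3 2 0, orderChamber 3 0 2, orderChamber 0 3 2} : Set (Set (Fin 4 → ℝ))).ncard =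
      6 := by
  rw [← range_chamber, ncard_range_of_injective
    (pairwise_disjoint_chamber.injective_of_disjoint_of_nonempty chamber_nonempty),
    Nat.card_eq_fintype_card, Fintype.card_fin]

end D4Arrangement

/-- The hyperplane arrangement I(D₄, 𝟖_v ⊕ 𝟖_s ⊕ 𝟖_c) has exactly six chambers: the
complement, in the open positive orthant of coordinates `t_i = ⟨α_i, φ⟩` (with `t 0 = t₁`,
`t 1 = t₂`, `t 2 = t₃`, `t 3 = t₄`), of the kernels of the twelve listed linear forms has
exactly six connected components, namely the intersections of the open positive orthant
with the six regions determined by the strict orderings of `t₁, t₃, t₄`. -/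
theorem D4_8v8s8c_six_chambers :
    let pos : Set (Fin 4 → ℝ) := {t | 0 < t 0 ∧ 0 < t 1 ∧ 0 < t 2 ∧ 0 < t 3}
    let C : Set (Fin 4 → ℝ) := {t | (0 < t 0 ∧ 0 < t 1 ∧ 0 < t 2 ∧ 0 < t 3) ∧
      2 * t 0 + 2 * t 1 + t 2 + t 3 ≠ 0 ∧ 2 * t 1 + t 2 + t 3 ≠ 0 ∧
      t 2 + t 3 ≠ 0 ∧ t 2 - t 3 ≠ 0 ∧
      t 0 + 2 * t 1 + 2 * t 2 + t 3 ≠ 0 ∧ t 0 + 2 * t 1 + t 3 ≠ 0 ∧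
      t 0 + t 3 ≠ 0 ∧ t 3 - t 0 ≠ 0 ∧
      t 0 + 2 * t 1 + t 2 + 2 * t 3 ≠ 0 ∧ t 0 + 2 * t 1 + t 2 ≠ 0 ∧
      t 0 + t 2 ≠ 0 ∧ t 2 - t 0 ≠ 0}
    -- the six orderings of (t₁, t₃, t₄) = (t 0, t 2, t 3)
    let A1 : Set (Fin 4 → ℝ) := pos ∩ {t | t 2 < t 0 ∧ t 3 < t 2}  -- t₁ > t₃ > t₄
    let A2 : Set (Fin 4 → ℝ) := pos ∩ {t | t 0 < t 2 ∧ t 3 < t 0}  -- t₃ > t₁ > t₄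
    let A3 : Set (Fin 4 → ℝ) := pos ∩ {t | t 3 < t 2 ∧ t 0 < t 3}  -- t₃ > t₄ > t₁
    let A4 : Set (Fin 4 → ℝ) := pos ∩ {t | t 2 < t 3 ∧ t 0 < t 2}  -- t₄ > t₃ > t₁
    let A5 : Set (Fin 4 → ℝ) := pos ∩ {t | t 0 < t 3 ∧ t 2 < t 0}  -- t₄ > t₁ > t₃
    let A6 : Set (Fin 4 → ℝ) := pos ∩ {t | t 3 < t 0 ∧ t 2 < t 3}  -- t₁ > t₄ > t₃
    ({s : Set (Fin 4 → ℝ) | ∃ x ∈ C, s = connectedComponentIn C x} =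
      {A1, A2, A3, A4, A5, A6}) ∧
    ({A1, A2, A3, A4, A5, A6} : Set (Set (Fin 4 → ℝ))).ncard = 6 := by
  intro pos C A1 A2 A3 A4 A5 A6
  exact ⟨D4Arrangement.setOf_connectedComponentIn_arrangementComplement,
    D4Arrangement.ncard_chambers⟩
end

section
/- Let g and S2 be integers and let n₇, n₁₄ be rational numbers. Then the identity −8(n₁₄+n₇−1)φ₁³ + 9(−2n₁₄+n₇+2)φ₁²φ₂ + 3(8n₁₄−n₇−8)φ₁φ₂² − 8(n₁₄−1)φ₂³ = 24(3(g−1)−S2)φ₁³ − 27(4(g−1)−S2)φ₁²φ₂ + 9(6(g−1)−S2)φ₁φ₂² − 8(g−1)φ₂³ holds for all real φ₁, φ₂ if and only if n₇ = 3S2 − 10(g−1) and n₁₄ = g. (The left-hand side is the one-loop prepotential 6𝓕_IMS of the 5d G₂ gauge theory with n₇ hypermultiplets in 𝟕 and n₁₄ in the adjoint 𝟏𝟒; the right-hand side is the triple intersection polynomial of the crepant resolution of a G₂-model on a Calabi–Yau threefold, specialized at φ₀ = 0, where S is a curve of genus g with self-intersection S2 in the base.) -/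
/-- Matching the 5d one-loop prepotential of G₂ with `n₇` hypers in `𝟕` and `n₁₄` in the
adjoint against the triple intersection polynomial of the crepant resolution of a
G₂-model on a Calabi–Yau threefold (at `φ₀ = 0`) holds for all `φ₁, φ₂` iff
`n₇ = 3S² − 10(g−1)` and `n₁₄ = g`. -/
theorem G2_hypermultiplet_count (g S2 : ℤ) (n7 n14 : ℚ) :
    (∀ φ1 φ2 : ℝ,
      -8*((n14 : ℝ) + (n7 : ℝ) - 1)*φ1^3 + 9*(-2*(n14 : ℝ) + (n7 : ℝ) + 2)*φ1^2*φ2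
        + 3*(8*(n14 : ℝ) - (n7 : ℝ) - 8)*φ1*φ2^2 - 8*((n14 : ℝ) - 1)*φ2^3
      = 24*(3*((g : ℝ) - 1) - (S2 : ℝ))*φ1^3 - 27*(4*((g : ℝ) - 1) - (S2 : ℝ))*φ1^2*φ2
        + 9*(6*((g : ℝ) - 1) - (S2 : ℝ))*φ1*φ2^2 - 8*((g : ℝ) - 1)*φ2^3)
    ↔ (n7 = 3*(S2 : ℚ) - 10*((g : ℚ) - 1) ∧ n14 = (g : ℚ)) := by
  constructor
  · intro h
    have h01 := h 0 1
    have h10 := h 1 0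
    have e14 : (n14 : ℝ) = (g : ℝ) := by nlinarith [h01]
    have e7 : (n7 : ℝ) = 3*(S2 : ℝ) - 10*((g : ℝ) - 1) := by nlinarith [h10, e14]
    constructor
    · exact_mod_cast e7
    · exact_mod_cast e14
  · rintro ⟨h7, h14⟩ φ1 φ2
    have e7 : (n7 : ℝ) = 3*(S2 : ℝ) - 10*((g : ℝ) - 1) := by exact_mod_cast h7
    have e14 : (n14 : ℝ) = (g : ℝ) := by exact_mod_cast h14
    rw [e7, e14]; ring
end

section
/- Let g and S2 be integers and let n₇, n₈, n₂₁ be rational numbers. Then the identity −(2n₈+8n₂₁−8)φ₁³ − (8n₇+8n₂₁−8)φ₃³ − 6n₈φ₁φ₃² + 3(−n₇+n₈+n₂₁−1)φ₁²φ₂ + 3(n₇−n₈+n₂₁−1)φ₁φ₂² + 6n₈φ₁φ₂φ₃ − 8(n₂₁−1)φ₂³ + 12(n₇−n₂₁+1)φ₂φ₃² − 6(n₇−3n₂₁+3)φ₂²φ₃ = 4(2(g−1)−S2)φ₁³ + 8(2(g−1)−S2)φ₃³ + 12(4(g−1)−S2)φ₁φ₃² − 3(4(g−1)−S2)(φ₁²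 + 4φ₁φ₃ + 4φ₃²)φ₂ + 3(6(g−1)−S2)(φ₁+2φ₃)φ₂² − 8(g−1)φ₂³ holds for all real φ₁, φ₂, φ₃ if and only if n₇ = S2 − 3(g−1), n₈ = 2S2 − 8(g−1), and n₂₁ = g. (The left-hand side is the one-loop prepotential 6𝓕⁺_IMS of the 5d Spin(7) gauge theory in the Coulomb chamber with φ₁ > φ₃, with n₇ hypermultiplets in 𝟕, n₈ in 𝟖, n₂₁ in the adjoint 𝟐𝟏; the right-hand side is the triple intersection polynomial of the first crepant resolution Y⁺ of a Spin(7)-model on a Calabi–Yau threefold, specialized at φ₀ = 0.) -/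
/-- Matching the 5d one-loop prepotential of Spin(7) (chamber `φ₁ > φ₃`) with `n₇` hypers
in `𝟕`, `n₈` in `𝟖` and `n₂₁` in the adjoint against the triple intersection polynomial of
the first crepant resolution `Y⁺` of a Spin(7)-model on a Calabi–Yau threefold (at
`φ₀ = 0`) holds for all `φ₁, φ₂, φ₃` iff `n₇ = S² − 3(g−1)`, `n₈ = 2S² − 8(g−1)`,
`n₂₁ = g`. -/
theorem spin7_hypermultiplet_count_plus (g S2 : ℤ) (n7 n8 n21 : ℚ) :
    (∀ φ1 φ2 φ3 : ℝ,
      -(2*(n8 : ℝ) + 8*(n21 : ℝ) - 8)*φ1^3 - (8*(n7 : ℝ) + 8*(n21 : ℝ) - 8)*φ3^3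
        - 6*(n8 : ℝ)*φ1*φ3^2
        + 3*(-(n7 : ℝ) + (n8 : ℝ) + (n21 : ℝ) - 1)*φ1^2*φ2
        + 3*((n7 : ℝ) - (n8 : ℝ) + (n21 : ℝ) - 1)*φ1*φ2^2
        + 6*(n8 : ℝ)*φ1*φ2*φ3 - 8*((n21 : ℝ) - 1)*φ2^3
        + 12*((n7 : ℝ) - (n21 : ℝ) + 1)*φ2*φ3^2 - 6*((n7 : ℝ) - 3*(n21 : ℝ) + 3)*φ2^2*φ3
      = 4*(2*((g : ℝ) - 1) - (S2 : ℝ))*φ1^3 + 8*(2*((g : ℝ) - 1) - (S2 : ℝ))*φ3^3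
        + 12*(4*((g : ℝ) - 1) - (S2 : ℝ))*φ1*φ3^2
        - 3*(4*((g : ℝ) - 1) - (S2 : ℝ))*(φ1^2 + 4*φ1*φ3 + 4*φ3^2)*φ2
        + 3*(6*((g : ℝ) - 1) - (S2 : ℝ))*(φ1 + 2*φ3)*φ2^2 - 8*((g : ℝ) - 1)*φ2^3)
    ↔ (n7 = (S2 : ℚ) - 3*((g : ℚ) - 1) ∧ n8 = 2*(S2 : ℚ) - 8*((g : ℚ) - 1) ∧
        n21 = (g : ℚ)) := by
  constructor
  · intro h
    have e1 := h 1 0 0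
    have e2 := h 0 1 0
    have e3 := h 0 0 1
    norm_num at e1 e2 e3
    have h21 : (n21 : ℝ) = (g : ℤ) := by linarith
    have h8 : (n8 : ℝ) = 2*(S2 : ℤ) - 8*((g : ℤ) - 1) := by linarith
    have h7 : (n7 : ℝ) = (S2 : ℤ) - 3*((g : ℤ) - 1) := by linarith
    refine ⟨?_, ?_, ?_⟩ <;> [exact_mod_cast h7; exact_mod_cast h8; exact_mod_cast h21]
  · rintro ⟨h7, h8, h21⟩
    subst h7 h8 h21
    intro φ1 φ2 φ3
    push_cast
    ring
end

section
/- Let g and S2 be integers and let n₇, n₈, n₂₁ be rational numbers. Then the identity −8(n₂₁−1)φ₁³ − (8n₇+2n₈+8n₂₁−8)φ₃³ − 6n₈φ₁²φ₃ + 3(−n₇+n₈+n₂₁−1)φ₁²φ₂ + 3(n₇−n₈+n₂₁−1)φ₁φ₂² + 6n₈φ₁φ₂φ₃ − 8(n₂₁−1)φ₂³ + 12(n₇−n₂₁+1)φ₂φ₃² − 6(n₇−3n₂₁+3)φ₂²φ₃ = −8(g−1)φ₁³ − 4(3S2−8(g−1))φ₃³ + 12(4(g−1)−S2)φ₁²φ₃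 − 3(4(g−1)−S2)(φ₁² + 4φ₁φ₃ + 4φ₃²)φ₂ + 3(6(g−1)−S2)(φ₁+2φ₃)φ₂² − 8(g−1)φ₂³ holds for all real φ₁, φ₂, φ₃ if and only if n₇ = S2 − 3(g−1), n₈ = 2S2 − 8(g−1), and n₂₁ = g. (The left-hand side is the one-loop prepotential 6𝓕⁻_IMS of the 5d Spin(7) gauge theory in the Coulomb chamber with φ₃ > φ₁; the right-hand side is the triple intersection polynomial of the second crepant resolution Y⁻ of a Spin(7)-model on a Calabi–Yau threefold, specialized at φ₀ = 0 and with the Coulomb coordinates matched via φ₁ ↔ φ₃. In particular the multiplicities n₇, n₈, n₂₁ obtained from the two crepant resolutions agree, so they do not depend on the choice of crepant resolution.) -/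
/-- Matching the 5d one-loop prepotential of Spin(7) (chamber `φ₃ > φ₁`) against the
triple intersection polynomial of the second crepant resolution `Y⁻` of a Spin(7)-model
on a Calabi–Yau threefold (at `φ₀ = 0`, Coulomb coordinates matched via `φ₁ ↔ φ₃`) holds
for all `φ₁, φ₂, φ₃` iff `n₇ = S² − 3(g−1)`, `n₈ = 2S² − 8(g−1)`, `n₂₁ = g`; in
particular the multiplicities agree with those from `Y⁺`. -/
theorem spin7_hypermultiplet_count_minus (g S2 : ℤ) (n7 n8 n21 : ℚ) :
    (∀ φ1 φ2 φ3 : ℝ,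
      -8*((n21 : ℝ) - 1)*φ1^3 - (8*(n7 : ℝ) + 2*(n8 : ℝ) + 8*(n21 : ℝ) - 8)*φ3^3
        - 6*(n8 : ℝ)*φ1^2*φ3
        + 3*(-(n7 : ℝ) + (n8 : ℝ) + (n21 : ℝ) - 1)*φ1^2*φ2
        + 3*((n7 : ℝ) - (n8 : ℝ) + (n21 : ℝ) - 1)*φ1*φ2^2
        + 6*(n8 : ℝ)*φ1*φ2*φ3 - 8*((n21 : ℝ) - 1)*φ2^3
        + 12*((n7 : ℝ) - (n21 : ℝ) + 1)*φ2*φ3^2 - 6*((n7 : ℝ) - 3*(n21 : ℝ) + 3)*φ2^2*φ3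
      = -8*((g : ℝ) - 1)*φ1^3 - 4*(3*(S2 : ℝ) - 8*((g : ℝ) - 1))*φ3^3
        + 12*(4*((g : ℝ) - 1) - (S2 : ℝ))*φ1^2*φ3
        - 3*(4*((g : ℝ) - 1) - (S2 : ℝ))*(φ1^2 + 4*φ1*φ3 + 4*φ3^2)*φ2
        + 3*(6*((g : ℝ) - 1) - (S2 : ℝ))*(φ1 + 2*φ3)*φ2^2 - 8*((g : ℝ) - 1)*φ2^3)
    ↔ (n7 = (S2 : ℚ) - 3*((g : ℚ) - 1) ∧ n8 = 2*(S2 : ℚ) - 8*((g : ℚ) - 1) ∧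
        n21 = (g : ℚ)) := by
  constructor
  · intro h
    have e1 := h 1 0 0
    have e2 := h 0 0 1
    have e3 := h 1 0 1
    norm_num at e1 e2 e3
    refine ⟨?_, ?_, ?_⟩
    · have : (n7:ℝ) = (S2:ℝ) - 3*((g:ℝ) - 1) := by linarith
      exact_mod_cast this
    · have : (n8:ℝ) = 2*(S2:ℝ) - 8*((g:ℝ) - 1) := by linarith
      exact_mod_cast this
    · have : (n21:ℝ) = (g:ℝ) := by linarith
      exact_mod_cast this
  · rintro ⟨h7, h8, h21⟩ φ1 φ2 φ3
    subst h7 h8 h21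
    push_cast
    ring
end

section
/- Let g and S2 be integers, and set n₇ = 3S2 − 10(g−1) and n₁₄ = g (the matter multiplicities of a G₂-model over a curve S of genus g with S² = S2 in a Calabi–Yau threefold compactification). Then the six-dimensional anomaly coefficients satisfy: (i) 4(1 − n₁₄) − n₇ = 3(2(g−1) − S2), so that X⁽²⁾ = 3(K·S) tr_𝟕F² when K·S = 2g−2−S2; and (ii) 10(1 − n₁₄) − n₇ = −3·S2, so that X⁽⁴⁾ = −(3/4)S2 (tr_𝟕F²)². Consequently the anomaly polynomial I₈ equals (K²/8)(trR²)² + (1/2)(K·S)(tr_𝟕F²)(trR²) + (1/2)S2(tr_𝟕F²)² and factorizes as (1/2)((1/2)c₁(B)trR² − S tr_𝟕F²)² in the cohomology ring of the base. -/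
/-- Anomaly cancellation for the 6d G₂ theory of a G₂-model: with `n₇ = 3S² − 10(g−1)` and
`n₁₄ = g`, the anomaly coefficients satisfy (i) `4(1−n₁₄) − n₇ = 3(2(g−1) − S²)` (so
`X⁽²⁾ = 3(K·S)tr_𝟕F²` when `K·S = 2g−2−S²`) and (ii) `10(1−n₁₄) − n₇ = −3S²` (so
`X⁽⁴⁾ = −(3/4)S²(tr_𝟕F²)²`); consequently `I₈` equals the stated quadratic expression and
factorizes as `(1/2)((1/2)c₁(B)trR² − S tr_𝟕F²)²` with `c₁(B) = −K`. -/
theorem G2_anomaly_cancellation (g S2 : ℤ) (n7 n14 : ℚ)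
    (hn7 : n7 = 3*(S2 : ℚ) - 10*((g : ℚ) - 1)) (hn14 : n14 = (g : ℚ))
    (K S trR2 trF2 : ℝ)
    (hKS : K * S = 2*(g : ℝ) - 2 - (S2 : ℝ)) (hSS : S * S = (S2 : ℝ)) :
    (4*(1 - n14) - n7 = 3*(2*((g : ℚ) - 1) - (S2 : ℚ))) ∧
    (10*(1 - n14) - n7 = -3*(S2 : ℚ)) ∧
    (((9 - (9 - K^2))/8)*trR2^2 + (1/6)*(3*(K*S)*trF2)*trR2
        - (2/3)*(-(3/4)*(S2 : ℝ)*trF2^2)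
      = (K^2/8)*trR2^2 + (1/2)*(K*S)*trF2*trR2 + (1/2)*(S2 : ℝ)*trF2^2) ∧
    ((K^2/8)*trR2^2 + (1/2)*(K*S)*trF2*trR2 + (1/2)*(S2 : ℝ)*trF2^2
      = (1/2)*((1/2)*(-K)*trR2 - S*trF2)^2) := by
  refine ⟨by rw [hn7, hn14]; ring, by rw [hn7, hn14]; ring, by ring, ?_⟩
  rw [← hSS]; ring
end

section
/- Let g and S2 be integers, and set n₇ = S2 − 3(g−1), n₈ = 2S2 − 8(g−1), n₂₁ = g (the matter multiplicities of a Spin(7)-model over a curve S of genus g with S² = S2 in a Calabi–Yau threefold compactification). Then the six-dimensional anomaly coefficients satisfy: (i) 5(1 − n₂₁) − n₇ − n₈ = 3(2(g−1) − S2), so that X⁽²⁾ = 3(K·S) tr_𝟕F² when K·S = 2g−2−S2; (ii) −(1 − n₂₁) − n₇ + (1/2)n₈ = 0, so that the coefficient of the irreducible quartic trace tr_𝟕F⁴ in X⁽⁴⁾ vanishes; and (iii) 3(1 − n₂₁) − (3/8)n₈ = −(3/4)S2, so that X⁽⁴⁾ = −(3/4)S2 (tr_𝟕F²)². Consequently I₈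 = (K²/8)(trR²)² + (1/2)(K·S)(tr_𝟕F²)(trR²) + (1/2)S2(tr_𝟕F²)² factorizes as (1/2)((1/2)c₁(B)trR² − S tr_𝟕F²)² in the cohomology ring of the base. -/
/-- Anomaly cancellation for the 6d Spin(7) theory of a Spin(7)-model: with
`n₇ = S² − 3(g−1)`, `n₈ = 2S² − 8(g−1)`, `n₂₁ = g`, the anomaly coefficients satisfy
(i) `5(1−n₂₁) − n₇ − n₈ = 3(2(g−1) − S²)`, (ii) `−(1−n₂₁) − n₇ + (1/2)n₈ = 0` (the
irreducible quartic trace cancels), and (iii) `3(1−n₂₁) − (3/8)n₈ = −(3/4)S²`;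
consequently `I₈` equals the stated quadratic expression and factorizes as
`(1/2)((1/2)c₁(B)trR² − S tr_𝟕F²)²` with `c₁(B) = −K`. -/
theorem spin7_anomaly_cancellation (g S2 : ℤ) (n7 n8 n21 : ℚ)
    (hn7 : n7 = (S2 : ℚ) - 3*((g : ℚ) - 1)) (hn8 : n8 = 2*(S2 : ℚ) - 8*((g : ℚ) - 1))
    (hn21 : n21 = (g : ℚ))
    (K S trR2 trF2 : ℝ)
    (hKS : K * S = 2*(g : ℝ) - 2 - (S2 : ℝ)) (hSS : S * S = (S2 : ℝ)) :
    (5*(1 - n21) - n7 - n8 = 3*(2*((g : ℚ) - 1) - (S2 : ℚ))) ∧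
    (-(1 - n21) - n7 + (1/2)*n8 = 0) ∧
    (3*(1 - n21) - (3/8)*n8 = -(3/4)*(S2 : ℚ)) ∧
    (((9 - (9 - K^2))/8)*trR2^2 + (1/6)*(3*(K*S)*trF2)*trR2
        - (2/3)*(-(3/4)*(S2 : ℝ)*trF2^2)
      = (K^2/8)*trR2^2 + (1/2)*(K*S)*trF2*trR2 + (1/2)*(S2 : ℝ)*trF2^2) ∧
    ((K^2/8)*trR2^2 + (1/2)*(K*S)*trF2*trR2 + (1/2)*(S2 : ℝ)*trF2^2
      = (1/2)*((1/2)*(-K)*trR2 - S*trF2)^2) := by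
  subst hn7 hn8 hn21
  exact ⟨by ring, by ring, by ring, by ring, by rw [← hSS]; ring⟩
end
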